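/- arXiv:1212.0619 — 2 statements merged into one kernel-verified Lean document; each statement's English description precedes it below -/
import Mathlib

section
/- Let G₁ be r₁-regular on n₁ vertices and m₁ edges, and G₂ be r₂-regular on n₂ vertices. Then the adjacency spectrum of G₁∨̇G₂ consists of: λᵢ(G₂) for i=2,…,n₂; 0 with multiplicity m₁−n₁; ±√(r₁+λⱼ(G₁)) for j=2,…,n₁; and the three roots of x³ − r₂x² − (n₁n₂ + 2r₁)x + 2r₁r₂ = 0. -/
open Matrix BigOperators Finset

attribute [local instance] Classical.propDecidable

/-- The coronal of a matrix `M`: `1ᵀ (xI − M)⁻¹ 1`. -/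
noncomputable def coronal {n : Type*} [Fintype n] [DecidableEq n]
    (M : Matrix n n ℝ) (x : ℝ) : ℝ :=
  (fun _ => (1 : ℝ)) ⬝ᵥ ((x • (1 : Matrix n n ℝ) - M)⁻¹ *ᵥ fun _ => (1 : ℝ))

/-- The adjacency matrix over ℝ (classical decidability). -/
noncomputable def adjM {V : Type*} (G : SimpleGraph V) : Matrix V V ℝ :=
  letI := Classical.decRel G.Adj
  G.adjMatrix ℝ

/-- The Laplacian matrix over ℝ. -/
noncomputable def lapM {V : Type*} [Fintype V] (G : SimpleGraph V) : Matrix V V ℝ :=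
  letI := Classical.decRel G.Adj
  letI : DecidableEq V := Classical.decEq V
  G.lapMatrix ℝ

/-- The signless Laplacian matrix over ℝ. -/
noncomputable def signlessLapM {V : Type*} [Fintype V] (G : SimpleGraph V) : Matrix V V ℝ :=
  letI := Classical.decRel G.Adj
  letI : DecidableEq V := Classical.decEq V
  G.degMatrix ℝ + G.adjMatrix ℝ

noncomputable instance edgeSetFintype {V : Type*} [Finite V] (G : SimpleGraph V) :
    Fintype G.edgeSet := Fintype.ofFinite _

/-- Subdivision-vertex join. -/
def svJoin {V₁ V₂ : Type*} (G₁ : SimpleGraph V₁) (G₂ : SimpleGraph V₂) :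
    SimpleGraph (V₁ ⊕ (G₁.edgeSet ⊕ V₂)) where
  Adj a b :=
    match a, b with
    | Sum.inl v, Sum.inr (Sum.inl e) => v ∈ (e : Sym2 V₁)
    | Sum.inr (Sum.inl e), Sum.inl v => v ∈ (e : Sym2 V₁)
    | Sum.inl _, Sum.inr (Sum.inr _) => True
    | Sum.inr (Sum.inr _), Sum.inl _ => True
    | Sum.inr (Sum.inr w), Sum.inr (Sum.inr w') => G₂.Adj w w'
    | _, _ => False
  symm := by
    constructor
    rintro (v | e | w) (v' | e' | w') h <;> simp_all <;> exact h.symm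
  loopless := by
    constructor
    rintro (v | e | w) h <;> simp_all

/-- Subdivision-edge join. -/
def seJoin {V₁ V₂ : Type*} (G₁ : SimpleGraph V₁) (G₂ : SimpleGraph V₂) :
    SimpleGraph (V₁ ⊕ (G₁.edgeSet ⊕ V₂)) where
  Adj a b :=
    match a, b with
    | Sum.inl v, Sum.inr (Sum.inl e) => v ∈ (e : Sym2 V₁)
    | Sum.inr (Sum.inl e), Sum.inl v => v ∈ (e : Sym2 V₁)
    | Sum.inr (Sum.inl _), Sum.inr (Sum.inr _) => True
    | Sum.inr (Sum.inr _), Sum.inr (Sum.inl _) => True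
    | Sum.inr (Sum.inr w), Sum.inr (Sum.inr w') => G₂.Adj w w'
    | _, _ => False
  symm := by
    constructor
    rintro (v | e | w) (v' | e' | w') h <;> simp_all <;> exact h.symm
  loopless := by
    constructor
    rintro (v | e | w) h <;> simp_all

/-- Number of spanning trees of a graph. -/
noncomputable def spanningTreeCount {V : Type*} (G : SimpleGraph V) : ℕ :=
  Nat.card {H : G.Subgraph // H.IsSpanning ∧ H.coe.IsTree}

/-!
Order the vertices as `V₁ ⊕ (E ⊕ V₂)`. The lower-right corner `diag(xI, xI − A₂)` of `xI − A` is
block diagonal, and since the vertex–edge incidence matrix `B` of `G₁` satisfies `BBᵀ = r₁I + A₁`,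
the Schur complement onto `V₁` is `x⁻¹((x² − r₁)I − A₁) − n₂/(x − r₂) · J`. The all-ones vector
is an eigenvector of `A₁` and of `A₂`, so by the matrix determinant lemma the rank-one term `J`
only contributes the scalar factor `1 − n₁n₂x/((x² − 2r₁)(x − r₂))`. This proves the identity
away from finitely many `x`; both sides are continuous in `x`, so it holds everywhere.
-/

namespace Matrix

variable {K m n e : Type*} [Field K] [Fintype n] [DecidableEq n]

lemma inv_mulVec_one_of_mulVec_one {P : Matrix n n K} {p : K} (hP : P.det ≠ 0) (hp : p ≠ 0)
    (h : P *ᵥ 1 = p • 1) : P⁻¹ *ᵥ 1 = p⁻¹ • 1 := by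
  let := P.invertibleOfIsUnitDet hP.isUnit
  exact inv_mulVec_eq_vec (by rw [mulVec_smul, h, smul_smul, inv_mul_cancel₀ hp, one_smul])

lemma allOnes_mul_inv_mul_allOnes {Q : Matrix n n K} {q : K} (hQ : Q.det ≠ 0) (hq : q ≠ 0)
    (h : Q *ᵥ 1 = q • 1) :
    (of fun _ _ => 1 : Matrix m n K) * Q⁻¹ * (of fun _ _ => 1 : Matrix n m K)
      = (Fintype.card n / q) • of fun _ _ => 1 := by
  ext i k
  have hrow := congrFun (inv_mulVec_one_of_mulVec_one hQ hq h)
  simp only [mulVec, dotProduct, Pi.one_apply, mul_one, Pi.smul_apply, smul_eq_mul] at hrow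
  simp [mul_apply, Finset.sum_comm (γ := n), hrow, div_eq_mul_inv]

lemma det_sub_smul_allOnes {P : Matrix n n K} {p : K} (hP : P.det ≠ 0) (hp : p ≠ 0)
    (h : P *ᵥ 1 = p • 1) (c : K) :
    (P - c • of fun _ _ => (1 : K)).det = P.det * (1 - c * Fintype.card n / p) := by
  have hrank : P - c • of (fun _ _ => (1 : K)) =
      P + replicateCol Unit (-c • 1 : n → K) * replicateRow Unit (1 : n → K) := by
    ext; simp [sub_eq_add_neg, mul_apply]
  rw [hrank, det_add_replicateCol_mul_replicateRow hP.isUnit, det_unique (n := Unit),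
    Matrix.mul_assoc, ← replicateCol_mulVec, add_apply, one_apply_eq,
    replicateRow_mul_replicateCol_apply, mulVec_smul, inv_mulVec_one_of_mulVec_one hP hp h]
  congr 1
  simp only [dotProduct_smul, dotProduct_one, Pi.one_apply, sum_const, card_univ, nsmul_eq_mul,
    mul_one, smul_eq_mul]
  ring

lemma det_fromBlocks_fromCols_fromRows [Fintype m] [DecidableEq m] [Fintype e] [DecidableEq e]
    (A : Matrix m m K) (B : Matrix m e K) (C : Matrix m n K) (B' : Matrix e m K)
    (C' : Matrix n m K) {D₁ : Matrix e e K} {D₂ : Matrix n n K} (hD₁ : D₁.det ≠ 0)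
    (hD₂ : D₂.det ≠ 0) :
    (fromBlocks A (fromCols B C) (fromRows B' C') (fromBlocks D₁ 0 0 D₂)).det
      = D₁.det * D₂.det * (A - B * D₁⁻¹ * B' - C * D₂⁻¹ * C').det := by
  let := D₁.invertibleOfIsUnitDet hD₁.isUnit
  let := D₂.invertibleOfIsUnitDet hD₂.isUnit
  let := fromBlocksZero₁₂Invertible D₁ 0 D₂
  rw [det_fromBlocks₂₂, det_fromBlocks_zero₁₂, invOf_fromBlocks_zero₁₂_eq, fromCols_mul_fromBlocks,
    fromCols_mul_fromRows]
  simp [sub_sub, invOf_eq_nonsing_inv]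

end Matrix

open Polynomial in
lemma Continuous.ext_of_eval_ne_zero {f g : ℝ → ℝ} (hf : Continuous f) (hg : Continuous g)
    {D : ℝ[X]} (hD : D ≠ 0) (h : ∀ x, D.eval x ≠ 0 → f x = g x) : f = g :=
  hf.ext_on ((finite_setOfPred_isRoot hD).countable.dense_compl ℝ) hg h

lemma adjM_apply {V : Type*} (G : SimpleGraph V) (i j : V) :
    adjM G i j = if G.Adj i j then 1 else 0 :=
  SimpleGraph.adjMatrix_apply ..

namespace SimpleGraph

variable {V : Type*} {G : SimpleGraph V}

noncomputable def edgeIncMatrix (R : Type*) [Zero R] [One R] [DecidableEq V] (G : SimpleGraph V)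
    [DecidableRel G.Adj] : Matrix V G.edgeSet R :=
  (G.incMatrix R).submatrix id (↑)

lemma edgeIncMatrix_apply (R : Type*) [Zero R] [One R] [DecidableEq V] [DecidableRel G.Adj]
    (v : V) (e : G.edgeSet) : G.edgeIncMatrix R v e = if v ∈ (e : Sym2 V) then 1 else 0 := by
  simp [edgeIncMatrix, incMatrix_apply', incidenceSet, e.2]

variable [Fintype V]

lemma edgeIncMatrix_mul_transpose (R : Type*) [Semiring R] [DecidableEq V] [DecidableRel G.Adj] :
    G.edgeIncMatrix R * (G.edgeIncMatrix R)ᵀ = G.incMatrix R * (G.incMatrix R)ᵀ := by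
  ext u v
  simp only [edgeIncMatrix, mul_apply, transpose_apply, submatrix_apply, id]
  rw [← Finset.sum_subtype G.edgeFinset (by simp) (fun e => G.incMatrix R u e * G.incMatrix R v e)]
  refine Fintype.sum_subset fun e he => ?_
  rw [mem_edgeFinset]
  by_contra hne
  exact he (by simp [G.incMatrix_of_notMem_incidenceSet (fun h => hne h.1)])

lemma IsRegularOfDegree.edgeIncMatrix_mul_transpose [DecidableEq V] {r : ℕ}
    (h : G.IsRegularOfDegree r) :
    G.edgeIncMatrix ℝ * (G.edgeIncMatrix ℝ)ᵀ = (r : ℝ) • 1 + adjM G := by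
  rw [SimpleGraph.edgeIncMatrix_mul_transpose, incMatrix_mul_transpose]
  ext u v
  by_cases huv : u = v
  · subst huv; simp [adjM_apply, h u]
  · simp [adjM_apply, huv, one_apply_ne huv]

lemma IsRegularOfDegree.adjM_mulVec_one {r : ℕ} (h : G.IsRegularOfDegree r) :
    adjM G *ᵥ 1 = (r : ℝ) • 1 := by
  ext v
  simpa [adjM] using G.adjMatrix_mulVec_const_apply_of_regular (α := ℝ) (a := 1) h (v := v)

end SimpleGraph

lemma adjM_svJoin {V₁ V₂ : Type*} [DecidableEq V₁] (G₁ : SimpleGraph V₁)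
    (G₂ : SimpleGraph V₂) :
    adjM (svJoin G₁ G₂) = fromBlocks 0 (fromCols (G₁.edgeIncMatrix ℝ) (of fun _ _ => 1))
      (fromRows (G₁.edgeIncMatrix ℝ)ᵀ (of fun _ _ => 1)) (fromBlocks 0 0 0 (adjM G₂)) := by
  ext (i | i | i) (j | j | j) <;> simp [adjM_apply, svJoin, SimpleGraph.edgeIncMatrix_apply]

theorem det_smul_one_sub_adjM_svJoin_of_det_ne_zero {V₁ V₂ : Type*} [Fintype V₁] [DecidableEq V₁] [Fintype V₂]
    [DecidableEq V₂] {G₁ : SimpleGraph V₁} {G₂ : SimpleGraph V₂} {r₁ r₂ : ℕ}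
    (h₁ : G₁.IsRegularOfDegree r₁) (h₂ : G₂.IsRegularOfDegree r₂) {x : ℝ} (hx : x ≠ 0)
    (hx₁ : x ^ 2 - 2 * r₁ ≠ 0) (hx₂ : x - r₂ ≠ 0)
    (hdet₁ : ((x ^ 2 - r₁) • 1 - adjM G₁).det ≠ 0) (hdet₂ : (x • 1 - adjM G₂).det ≠ 0) :
    x ^ Fintype.card V₁ * (x • 1 - adjM (svJoin G₁ G₂)).det
      = x ^ Fintype.card G₁.edgeSet * ((x ^ 2 - r₁) • 1 - adjM G₁).det * (x • 1 - adjM G₂).det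
        * (1 - Fintype.card V₁ * Fintype.card V₂ * x / ((x ^ 2 - 2 * r₁) * (x - r₂))) := by
  have hblocks : x • 1 - adjM (svJoin G₁ G₂) = fromBlocks (x • 1)
      (fromCols (-G₁.edgeIncMatrix ℝ) (-of fun _ _ => 1))
      (fromRows (-(G₁.edgeIncMatrix ℝ)ᵀ) (-of fun _ _ => 1))
      (fromBlocks (x • 1) 0 0 (x • 1 - adjM G₂)) := by
    rw [adjM_svJoin]
    ext (i | i | i) (j | j | j) <;> simp [one_apply]
  have hinv : (x • 1 : Matrix G₁.edgeSet G₁.edgeSet ℝ)⁻¹ = x⁻¹ • 1 :=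
    inv_eq_left_inv (by simp [smul_smul, hx])
  have hP : x • 1 - x⁻¹ • ((r₁ : ℝ) • 1 + adjM G₁) = x⁻¹ • ((x ^ 2 - r₁) • 1 - adjM G₁) := by
    ext i j
    simp only [Matrix.sub_apply, Matrix.add_apply, Matrix.smul_apply, smul_eq_mul]
    field_simp
    ring
  have hP1 : (x⁻¹ • ((x ^ 2 - r₁) • 1 - adjM G₁)) *ᵥ 1 = (x - 2 * r₁ / x) • (1 : V₁ → ℝ) := by
    rw [smul_mulVec, sub_mulVec, smul_mulVec, one_mulVec, h₁.adjM_mulVec_one, ← sub_smul, smul_smul]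
    congr 1
    field_simp
    ring
  have hS1 : (x • 1 - adjM G₂) *ᵥ 1 = (x - r₂) • (1 : V₂ → ℝ) := by
    rw [sub_mulVec, smul_mulVec, one_mulVec, h₂.adjM_mulVec_one, ← sub_smul]
  have hp : x - 2 * r₁ / x ≠ 0 := by
    rw [sub_div' hx]; exact div_ne_zero (by rwa [← sq]) hx
  rw [hblocks, det_fromBlocks_fromCols_fromRows _ _ _ _ _ (by simp [hx]) hdet₂, hinv]
  simp only [Matrix.neg_mul, Matrix.mul_neg, neg_neg]
  rw [Matrix.mul_smul, Matrix.mul_one, Matrix.smul_mul, h₁.edgeIncMatrix_mul_transpose,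
    allOnes_mul_inv_mul_allOnes hdet₂ hx₂ hS1, hP,
    det_sub_smul_allOnes (by simp [hdet₁, hx]) hp hP1, det_smul, det_smul, det_one, inv_pow]
  field_simp

theorem det_smul_one_sub_adjM_svJoin {V₁ V₂ : Type*} [Fintype V₁] [DecidableEq V₁] [Fintype V₂]
    [DecidableEq V₂] {G₁ : SimpleGraph V₁} {G₂ : SimpleGraph V₂} {r₁ r₂ : ℕ}
    (h₁ : G₁.IsRegularOfDegree r₁) (h₂ : G₂.IsRegularOfDegree r₂) {lam₁ : V₁ → ℝ} {v₁ : V₁}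
    (hlam₁ : lam₁ v₁ = r₁) (hchar₁ : ∀ x : ℝ, (x • 1 - adjM G₁).det = ∏ i, (x - lam₁ i))
    {lam₂ : V₂ → ℝ} {v₂ : V₂} (hlam₂ : lam₂ v₂ = r₂)
    (hchar₂ : ∀ x : ℝ, (x • 1 - adjM G₂).det = ∏ i, (x - lam₂ i)) (x : ℝ) :
    x ^ Fintype.card V₁ * (x • 1 - adjM (svJoin G₁ G₂)).det
      = x ^ Fintype.card G₁.edgeSet * (∏ i ∈ univ.erase v₂, (x - lam₂ i))
        * (∏ j ∈ univ.erase v₁, (x ^ 2 - (r₁ + lam₁ j)))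
        * (x ^ 3 - r₂ * x ^ 2 - (Fintype.card V₁ * Fintype.card V₂ + 2 * r₁) * x
          + 2 * r₁ * r₂) := by
  have hsplit₁ (y : ℝ) : ((y ^ 2 - r₁) • 1 - adjM G₁).det
      = (y ^ 2 - 2 * r₁) * ∏ j ∈ univ.erase v₁, (y ^ 2 - (r₁ + lam₁ j)) := by
    rw [hchar₁, ← mul_prod_erase _ _ (mem_univ _), hlam₁]
    simp only [sub_sub, two_mul]
  have hsplit₂ (y : ℝ) : (y • 1 - adjM G₂).det = (y - r₂) * ∏ i ∈ univ.erase v₂, (y - lam₂ i) := by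
    rw [hchar₂, ← mul_prod_erase _ _ (mem_univ _), hlam₂]
  revert x
  open Polynomial in
  refine congrFun (Continuous.ext_of_eval_ne_zero (by fun_prop) (by fun_prop)
    (D := X * (∏ i, (X - C (lam₂ i))) * ∏ j, (X ^ 2 - C (r₁ + lam₁ j)))
    ((monic_X.mul (monic_prod_of_monic _ _ fun i _ => monic_X_sub_C _)).mul
      (monic_prod_of_monic _ _ fun j _ => monic_X_pow_sub_C _ two_ne_zero)).ne_zero
    fun y hy => ?_)
  obtain ⟨⟨hy, hy₂⟩, hy₁⟩ : (y ≠ 0 ∧ (y • 1 - adjM G₂).det ≠ 0)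
      ∧ ((y ^ 2 - r₁) • 1 - adjM G₁).det ≠ 0 := by
    simpa [hchar₂, hchar₁, sub_sub, eval_prod] using hy
  have hr₁ : y ^ 2 - 2 * r₁ ≠ 0 := left_ne_zero_of_mul (hsplit₁ y ▸ hy₁)
  have hr₂ : y - r₂ ≠ 0 := left_ne_zero_of_mul (hsplit₂ y ▸ hy₂)
  rw [det_smul_one_sub_adjM_svJoin_of_det_ne_zero h₁ h₂ hy hr₁ hr₂ hy₁ hy₂, hsplit₁, hsplit₂]
  field_simp
  ring

theorem adj_spectrum_svJoin_regular_general (n₁ m₁ n₂ r₁ r₂ : ℕ) (hn₁ : 0 < n₁) (hn₂ : 0 < n₂)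
    (G₁ : SimpleGraph (Fin n₁)) (hreg₁ : G₁.IsRegularOfDegree r₁)
    (hm₁ : G₁.edgeFinset.card = m₁)
    (G₂ : SimpleGraph (Fin n₂)) (hreg₂ : G₂.IsRegularOfDegree r₂)
    (lam₁ : Fin n₁ → ℝ) (hlam₁0 : lam₁ ⟨0, hn₁⟩ = r₁)
    (hchar₁ : ∀ x : ℝ,
      (x • (1 : Matrix (Fin n₁) (Fin n₁) ℝ) - adjM G₁).det = ∏ i, (x - lam₁ i))
    (lam₂ : Fin n₂ → ℝ) (hlam₂0 : lam₂ ⟨0, hn₂⟩ = r₂)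
    (hchar₂ : ∀ x : ℝ,
      (x • (1 : Matrix (Fin n₂) (Fin n₂) ℝ) - adjM G₂).det = ∏ i, (x - lam₂ i))
    (x : ℝ) (hx0 : x ≠ 0) :
    (x • (1 : Matrix (Fin n₁ ⊕ (G₁.edgeSet ⊕ Fin n₂)) (Fin n₁ ⊕ (G₁.edgeSet ⊕ Fin n₂)) ℝ)
        - adjM (svJoin G₁ G₂)).det
      = (∏ i ∈ Finset.univ.erase ⟨0, hn₂⟩, (x - lam₂ i))
        * x ^ ((m₁ : ℤ) - (n₁ : ℤ))
        * (∏ j ∈ Finset.univ.erase ⟨0, hn₁⟩, (x ^ 2 - (r₁ + lam₁ j)))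
        * (x ^ 3 - r₂ * x ^ 2 - (n₁ * n₂ + 2 * r₁) * x + 2 * r₁ * r₂) := by
  have key := det_smul_one_sub_adjM_svJoin hreg₁ hreg₂ hlam₁0 hchar₁ hlam₂0 hchar₂ x
  rw [Fintype.card_fin, Fintype.card_fin, ← SimpleGraph.edgeFinset_card, hm₁] at key
  rw [zpow_sub₀ hx0, zpow_natCast, zpow_natCast]
  field_simp
  linear_combination key

/-- The `A`-spectrum of `G₁ ∨̇ G₂` for regular graphs `G₁` (degree `r₁`) and `G₂`
(degree `r₂`): the eigenvalues `λᵢ(G₂)` for `i ≥ 2`, `0` with multiplicity `m₁−n₁`,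
`±√(r₁+λⱼ(G₁))` for `j ≥ 2`, and the three roots of
`x³ − r₂x² − (n₁n₂ + 2r₁)x + 2r₁r₂ = 0`. -/
theorem adj_spectrum_svJoin_regular (n₁ m₁ n₂ r₁ r₂ : ℕ) (hn₁ : 0 < n₁) (hn₂ : 0 < n₂)
    (G₁ : SimpleGraph (Fin n₁)) (hreg₁ : G₁.IsRegularOfDegree r₁)
    (hm₁ : G₁.edgeFinset.card = m₁)
    (G₂ : SimpleGraph (Fin n₂)) (hreg₂ : G₂.IsRegularOfDegree r₂)
    (lam₁ : Fin n₁ → ℝ) (hlam₁ : Antitone lam₁) (hlam₁0 : lam₁ ⟨0, hn₁⟩ = r₁)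
    (hchar₁ : ∀ x : ℝ,
      (x • (1 : Matrix (Fin n₁) (Fin n₁) ℝ) - adjM G₁).det = ∏ i, (x - lam₁ i))
    (lam₂ : Fin n₂ → ℝ) (hlam₂ : Antitone lam₂) (hlam₂0 : lam₂ ⟨0, hn₂⟩ = r₂)
    (hchar₂ : ∀ x : ℝ,
      (x • (1 : Matrix (Fin n₂) (Fin n₂) ℝ) - adjM G₂).det = ∏ i, (x - lam₂ i))
    (x : ℝ) (hx0 : x ≠ 0) :
    (x • (1 : Matrix (Fin n₁ ⊕ (G₁.edgeSet ⊕ Fin n₂)) (Fin n₁ ⊕ (G₁.edgeSet ⊕ Fin n₂)) ℝ)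
        - adjM (svJoin G₁ G₂)).det
      = (∏ i ∈ Finset.univ.erase ⟨0, hn₂⟩, (x - lam₂ i))
        * x ^ ((m₁ : ℤ) - (n₁ : ℤ))
        * (∏ j ∈ Finset.univ.erase ⟨0, hn₁⟩, (x ^ 2 - (r₁ + lam₁ j)))
        * (x ^ 3 - r₂ * x ^ 2 - (n₁ * n₂ + 2 * r₁) * x + 2 * r₁ * r₂) :=
  adj_spectrum_svJoin_regular_general n₁ m₁ n₂ r₁ r₂ hn₁ hn₂ G₁ hreg₁ hm₁ G₂ hreg₂ lam₁ hlam₁0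
    hchar₁ lam₂ hlam₂0 hchar₂ x hx0
end

section
/- If G₁ and G₂ are A-cospectral regular graphs (hence with the same degree and same numbers of vertices and edges), and H is any graph, then the subdivision-vertex joins G₁∨̇H and G₂∨̇H are A-cospectral. -/
open Matrix BigOperators Finset

attribute [local instance] Classical.propDecidable

/-!
Write `f_X` for characteristic polynomials and `J` for all-ones matrices, and order the vertices
of `G ∨̇ H` as `V ⊕ (E ⊕ W)`. The lower-right block of `xI - A(G ∨̇ H)` is `diag(xI, xI - A_H)`,
so a Schur complement gives
`det(xI - A(G ∨̇ H)) = x^|E| · f_H(x) · det(xI - x⁻¹ R Rᵀ - Γ_H(x) J)`,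
where `R` is the vertex-edge incidence matrix, `R Rᵀ` the signless Laplacian of `G` and `Γ_H` the
coronal of `A_H`. If `G` is `r`-regular then `R Rᵀ = rI + A_G` and `A_G J = rJ`, so the last
determinant is `x⁻ⁿ f_G(x² - r) (1 - x Γ_H(x) n / (x² - 2r))`. Thus `f_{G ∨̇ H}` depends on `G`
only through `n`, `r`, `|E| = nr/2` and `f_G`, and `r` is itself determined by `f_G`: it is an
eigenvalue, and every eigenvalue has modulus at most `r` by Gershgorin. Since the formula holds
for all but finitely many `x`, the polynomials agree.
-/

open Polynomial

theorem Polynomial.eq_of_eval_eq_of_eval_ne_zero {R : Type*} [CommRing R] [IsDomain R]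
    [Infinite R] {p₁ p₂ q : R[X]} (hq : q ≠ 0) (h : ∀ x, q.eval x ≠ 0 → p₁.eval x = p₂.eval x) :
    p₁ = p₂ :=
  eq_of_infinite_eval_eq _ _ <| (finite_setOfPred_isRoot hq).infinite_compl.mono fun x hx => h x hx

namespace Matrix

variable {K : Type*} [Field K] {l m n : Type*}

theorem eval_charpoly_eq_det [Fintype n] [DecidableEq n] (M : Matrix n n K) (t : K) :
    M.charpoly.eval t = (t • 1 - M).det := by
  rw [eval_charpoly, scalar_apply, smul_one_eq_diagonal]

theorem det_sub_smul_vecMulVec_one [Fintype n] [DecidableEq n] {A : Matrix n n K} {r : K}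
    (hA : A *ᵥ 1 = r • 1) {t : K} (ht : t ≠ r) (c : K) :
    (t • 1 - A - c • vecMulVec 1 1).det = (t • 1 - A).det * (1 - c * Fintype.card n / (t - r)) := by
  have hP : (t • 1 - A) * vecMulVec 1 1 = (t - r) • vecMulVec (1 : n → K) 1 := by
    rw [mul_vecMulVec, sub_mulVec, hA, smul_mulVec, one_mulVec, ← sub_smul, smul_vecMulVec]
  have hfactor : t • 1 - A - c • vecMulVec 1 1
      = (t • 1 - A) * (1 - (c / (t - r)) • vecMulVec 1 1) := by
    rw [Matrix.mul_sub, Matrix.mul_one, Matrix.mul_smul, hP, smul_smul,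
      div_mul_cancel₀ _ (sub_ne_zero.mpr ht)]
  rw [hfactor, det_mul, sub_eq_add_neg (1 : Matrix n n K), ← neg_smul, ← smul_vecMulVec,
    vecMulVec_eq Unit, det_one_add_replicateCol_mul_replicateRow]
  simp only [dotProduct, Pi.one_apply, Pi.smul_apply, smul_eq_mul, mul_one, sum_const,
    card_univ, nsmul_eq_mul]
  ring

theorem smul_one_sub_fromBlocks [DecidableEq m] [DecidableEq n] (x : K) (A : Matrix m m K)
    (B : Matrix m n K) (C : Matrix n m K) (D : Matrix n n K) :
    x • 1 - fromBlocks A B C D = fromBlocks (x • 1 - A) (-B) (-C) (x • 1 - D) := by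
  rw [← fromBlocks_one, fromBlocks_smul, sub_eq_add_neg, fromBlocks_neg, fromBlocks_add]
  simp only [smul_zero, zero_add, sub_eq_add_neg]

theorem det_smul_one_sub_fromBlocks_zero [Fintype m] [Fintype n] [DecidableEq m] [DecidableEq n]
    (B : Matrix m n K) (C : Matrix n m K) (D : Matrix n n K) {x : K}
    (hD : IsUnit (x • 1 - D).det) :
    (x • 1 - fromBlocks 0 B C D).det = (x • 1 - D).det * (x • 1 - B * (x • 1 - D)⁻¹ * C).det := by
  have : Invertible (x • 1 - D) := invertibleOfIsUnitDet _ hD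
  rw [smul_one_sub_fromBlocks, det_fromBlocks₂₂, invOf_eq_nonsing_inv]
  simp only [sub_zero, Matrix.neg_mul, Matrix.mul_neg, neg_neg]

theorem inv_smul_one_sub_fromBlocks_zero_zero_zero [Fintype m] [Fintype n] [DecidableEq m]
    [DecidableEq n] (N : Matrix n n K) {x : K} (hx : x ≠ 0) (hN : IsUnit (x • 1 - N).det) :
    (x • 1 - fromBlocks 0 0 0 N : Matrix (m ⊕ n) (m ⊕ n) K)⁻¹
      = fromBlocks (x⁻¹ • 1) 0 0 (x • 1 - N)⁻¹ := by
  refine inv_eq_right_inv ?_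
  rw [smul_one_sub_fromBlocks, fromBlocks_multiply, mul_nonsing_inv _ hN, ← fromBlocks_one]
  simp [smul_smul, hx]

theorem fromCols_mul_fromBlocks_zero_mul_transpose [Fintype m] [Fintype n] (B : Matrix l m K)
    (C : Matrix l n K) (P : Matrix m m K) (Q : Matrix n n K) :
    fromCols B C * fromBlocks P 0 0 Q * (fromCols B C)ᵀ = B * P * Bᵀ + C * Q * Cᵀ := by
  rw [transpose_fromCols, fromCols_mul_fromBlocks, fromCols_mul_fromRows]
  simp

theorem vecMulVec_one_mul_mul_vecMulVec_one [Fintype n] (Q : Matrix n n K) :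
    vecMulVec (1 : l → K) (1 : n → K) * Q * (vecMulVec (1 : l → K) (1 : n → K))ᵀ
      = (1 ⬝ᵥ Q *ᵥ 1) • vecMulVec (1 : l → K) 1 := by
  rw [transpose_vecMulVec, vecMulVec_mul, vecMulVec_mul_vecMulVec, vecMulVec_smul,
    dotProduct_mulVec, dotProduct_comm]

end Matrix

namespace SimpleGraph

variable {V W : Type*}

theorem adjM_apply (G : SimpleGraph V) (u v : V) : adjM G u v = if G.Adj u v then 1 else 0 := by
  simp [adjM]

noncomputable def incM (G : SimpleGraph V) : Matrix V G.edgeSet ℝ :=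
  Matrix.of fun v e => if v ∈ (e : Sym2 V) then 1 else 0

theorem incM_mul_transpose [Fintype V] (G : SimpleGraph V) :
    incM G * (incM G)ᵀ = signlessLapM G := by
  classical
  have hinc (v : V) (e : G.edgeSet) : incM G v e = G.incMatrix ℝ v e := by
    simp [incM, incMatrix_apply', incidenceSet, e.2]
  ext u v
  have hsum : (incM G * (incM G)ᵀ) u v = (G.incMatrix ℝ * (G.incMatrix ℝ)ᵀ) u v := by
    simp only [Matrix.mul_apply, Matrix.transpose_apply, hinc]
    rw [Finset.sum_set_coe (f := fun e => G.incMatrix ℝ u e * G.incMatrix ℝ v e)]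
    refine Finset.sum_subset (Finset.subset_univ _) fun e _ he => ?_
    rw [Set.mem_toFinset] at he
    simp [incMatrix_apply', incidenceSet, he]
  rw [hsum, incMatrix_mul_transpose]
  rcases eq_or_ne u v with rfl | huv <;> simp [signlessLapM, degMatrix, *]

theorem adjM_svJoin (G : SimpleGraph V) (H : SimpleGraph W) :
    adjM (svJoin G H) = fromBlocks 0 (fromCols (incM G) (vecMulVec 1 1))
      (fromCols (incM G) (vecMulVec 1 1))ᵀ (fromBlocks 0 0 0 (adjM H)) := by
  ext (v | e | w) (v' | e' | w') <;> simp [adjM_apply, svJoin, incM]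

theorem eval_charpoly_adjM_svJoin [Fintype V] [DecidableEq V] [Fintype W] [DecidableEq W]
    (G : SimpleGraph V) (H : SimpleGraph W) {x : ℝ} (hx : x ≠ 0)
    (hH : (adjM H).charpoly.eval x ≠ 0) :
    (adjM (svJoin G H)).charpoly.eval x = x ^ Nat.card G.edgeSet * (adjM H).charpoly.eval x *
      (x • 1 - x⁻¹ • signlessLapM G - coronal (adjM H) x • vecMulVec 1 1).det := by
  simp only [eval_charpoly_eq_det] at hH ⊢
  have hD : (x • 1 - fromBlocks 0 0 0 (adjM H) : Matrix (G.edgeSet ⊕ W) _ ℝ).det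
      = x ^ Nat.card G.edgeSet * (x • 1 - adjM H).det := by
    simp only [smul_one_sub_fromBlocks, neg_zero, sub_zero]
    rw [det_fromBlocks_zero₂₁, det_smul, det_one, mul_one, Fintype.card_eq_nat_card]
  rw [adjM_svJoin, det_smul_one_sub_fromBlocks_zero, hD,
    inv_smul_one_sub_fromBlocks_zero_zero_zero _ hx hH.isUnit,
    fromCols_mul_fromBlocks_zero_mul_transpose, vecMulVec_one_mul_mul_vecMulVec_one,
    Matrix.mul_smul, Matrix.mul_one, Matrix.smul_mul, incM_mul_transpose, sub_add_eq_sub_sub]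
  · rfl
  · rw [hD]
    exact (mul_ne_zero (pow_ne_zero _ hx) hH).isUnit

end SimpleGraph

namespace SimpleGraph.IsRegularOfDegree

variable {V V' W : Type*} [Fintype V] {G : SimpleGraph V} {r : ℕ}

theorem signlessLapM_eq [DecidableEq V] (hG : G.IsRegularOfDegree r) :
    signlessLapM G = (r : ℝ) • 1 + adjM G := by
  ext u v
  rcases eq_or_ne u v with rfl | huv <;> simp [signlessLapM, adjM, degMatrix, hG.degree_eq, *]

theorem adjM_mulVec_one_s7 (hG : G.IsRegularOfDegree r) : adjM G *ᵥ 1 = (r : ℝ) • 1 := by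
  ext v
  simp [adjM, hG.degree_eq]

theorem two_mul_card_edgeSet (hG : G.IsRegularOfDegree r) :
    2 * Nat.card G.edgeSet = Fintype.card V * r := by
  classical
  calc 2 * Nat.card G.edgeSet = ∑ v, G.degree v := by
        rw [G.sum_degrees_eq_twice_card_edges, Nat.card_eq_card_toFinset, edgeFinset]
        congr!
    _ = Fintype.card V * r := by simp [hG.degree_eq, mul_comm]

theorem isRoot_charpoly_adjM [DecidableEq V] [Nonempty V] (hG : G.IsRegularOfDegree r) :
    (adjM G).charpoly.IsRoot r := by
  rw [← Matrix.charpoly_toLin', ← Module.End.hasEigenvalue_iff_isRoot_charpoly]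
  refine Module.End.hasEigenvalue_of_hasEigenvector (x := 1) ⟨?_, one_ne_zero⟩
  rw [Module.End.mem_eigenspace_iff, Matrix.toLin'_apply, hG.adjM_mulVec_one_s7]

theorem abs_le_of_isRoot_charpoly_adjM [DecidableEq V] (hG : G.IsRegularOfDegree r) {μ : ℝ}
    (hμ : (adjM G).charpoly.IsRoot μ) : |μ| ≤ r := by
  rw [← Matrix.charpoly_toLin', ← Module.End.hasEigenvalue_iff_isRoot_charpoly] at hμ
  obtain ⟨v, hv⟩ := eigenvalue_mem_ball hμ
  rw [Metric.mem_closedBall, Finset.sum_erase _ (by simp [adjM_apply])] at hv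
  simpa [adjM_apply, apply_ite, Finset.sum_boole, ← neighborFinset_eq_filter, hG.degree_eq]
    using hv

theorem eq_of_charpoly_adjM_eq [DecidableEq V] [Nonempty V] [Fintype V'] [DecidableEq V']
    {G' : SimpleGraph V'} {r' : ℕ} (hG : G.IsRegularOfDegree r) (hG' : G'.IsRegularOfDegree r')
    (h : (adjM G).charpoly = (adjM G').charpoly) : r = r' := by
  have : Nonempty V' := (isEmpty_or_nonempty V').resolve_left fun _ => by
    simpa [h] using hG.isRoot_charpoly_adjM
  have h₁ := hG'.abs_le_of_isRoot_charpoly_adjM (h ▸ hG.isRoot_charpoly_adjM)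
  have h₂ := hG.abs_le_of_isRoot_charpoly_adjM (h ▸ hG'.isRoot_charpoly_adjM)
  rw [Nat.abs_cast] at h₁ h₂
  exact_mod_cast le_antisymm h₁ h₂

theorem eval_charpoly_adjM_svJoin [DecidableEq V] [Fintype W] [DecidableEq W]
    (hG : G.IsRegularOfDegree r) (H : SimpleGraph W) {x : ℝ} (hx : x ≠ 0)
    (hH : (adjM H).charpoly.eval x ≠ 0) (hxr : x ^ 2 ≠ 2 * r) :
    (adjM (svJoin G H)).charpoly.eval x
      = x ^ Nat.card G.edgeSet * (adjM H).charpoly.eval x * x⁻¹ ^ Fintype.card V *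
        (adjM G).charpoly.eval (x ^ 2 - r) *
        (1 - x * coronal (adjM H) x * Fintype.card V / (x ^ 2 - 2 * r)) := by
  have hscale : x • 1 - x⁻¹ • ((r : ℝ) • 1 + adjM G) - coronal (adjM H) x • vecMulVec 1 1
      = x⁻¹ • ((x ^ 2 - r) • 1 - adjM G - (x * coronal (adjM H) x) • vecMulVec 1 1) := by
    match_scalars <;> field_simp
  have hxr' : x ^ 2 - r ≠ (r : ℝ) := by
    contrapose! hxr
    linarith
  rw [SimpleGraph.eval_charpoly_adjM_svJoin G H hx hH, hG.signlessLapM_eq, hscale, det_smul,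
    det_sub_smul_vecMulVec_one hG.adjM_mulVec_one_s7 hxr', eval_charpoly_eq_det (adjM G)]
  ring

end SimpleGraph.IsRegularOfDegree

/-- If `G₁` and `G₂` are `A`-cospectral regular graphs and `H` is any graph, then
`G₁ ∨̇ H` and `G₂ ∨̇ H` are `A`-cospectral. -/
theorem svJoin_A_cospectral_left (n r₁ r₂ : ℕ) (G₁ G₂ : SimpleGraph (Fin n))
    (hreg₁ : G₁.IsRegularOfDegree r₁) (hreg₂ : G₂.IsRegularOfDegree r₂)
    (hcosp : (adjM G₁).charpoly = (adjM G₂).charpoly)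
    {W : Type*} [Fintype W] (H : SimpleGraph W) :
    (adjM (svJoin G₁ H)).charpoly = (adjM (svJoin G₂ H)).charpoly := by
  obtain rfl | hn := Nat.eq_zero_or_pos n
  · rw [Subsingleton.elim G₁ G₂]
  have : Nonempty (Fin n) := Fin.pos_iff_nonempty.mp hn
  obtain rfl : r₁ = r₂ := hreg₁.eq_of_charpoly_adjM_eq hreg₂ hcosp
  have hm : Nat.card G₁.edgeSet = Nat.card G₂.edgeSet := by
    have h₁ := hreg₁.two_mul_card_edgeSet
    have h₂ := hreg₂.two_mul_card_edgeSet
    omega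
  refine Polynomial.eq_of_eval_eq_of_eval_ne_zero
    (q := X * (adjM H).charpoly * (X ^ 2 - C (2 * r₁ : ℝ))) ?_ fun x hx => ?_
  · exact mul_ne_zero (mul_ne_zero X_ne_zero (adjM H).charpoly_monic.ne_zero)
      (X_pow_sub_C_ne_zero two_pos _)
  simp only [eval_mul, eval_X, eval_sub, eval_pow, eval_C, mul_ne_zero_iff, sub_ne_zero] at hx
  obtain ⟨⟨hx, hH⟩, hxr⟩ := hx
  rw [hreg₁.eval_charpoly_adjM_svJoin H hx hH hxr, hreg₂.eval_charpoly_adjM_svJoin H hx hH hxr,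
    hm, hcosp]
end
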